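/- There exist a connected building set B = B(P,4) on [5], an element S = {1,3} ∈ B, and two elements S₁ = {2}, S₂ = {4} of the contraction B/S such that S₁ ⊔ S₂ ∈ B/S but, regarding S₁, S₂ as elements of B, S₁ ⊔ S₂ ∉ B. Consequently, the nested set complex N_{B/S} is not isomorphic to the full subcomplex of N_B on the vertex set (B/S) ∩ B. -/

import Mathlib

/-!
The contraction `B/S` with `S = {1, 3}` contains `{2, 4}`, because `{2, 4} ∪ S = {1, 2, 3, 4}` lies in
`B(P,4)`, while `{2, 4}` itself does not. Hence the disjoint vertices `{2}`, `{4}` span an edge of the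
full subcomplex of `N_B` but not of `N_{B/S}`. No relabelling can repair this: since `1 ∈ S`, the only
vertices of `(B/S) ∩ B` are the three singletons of `[5] \ S`, whereas `N_{B/S}` has at least the four
vertices `{2}`, `{4}`, `{5}`, `{2, 4}`.
-/

/-- The building set `B(P,n)` on `[n+1]`. -/
def BP (n : ℕ) : Set (Finset ℕ) :=
  {S | ∃ i ∈ Finset.Icc 1 (n + 1), S = {i}} ∪
  {S | ∃ T ⊆ Finset.Icc 3 (n + 1), S = {1, 2} ∪ T} ∪
  {S | ∃ T : Finset ℕ, T ⊆ Finset.Icc 3 n ∧ T.Nonempty ∧ S = {1} ∪ T} ∪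
  {Finset.Icc 1 (n + 1)}

/-- The nested set complex of a building set `B` with maximal element `V`. -/
def nestedSetComplex (V : Finset ℕ) (B : Set (Finset ℕ)) : Set (Finset (Finset ℕ)) :=
  {σ | (∀ T ∈ σ, T ∈ B ∧ T ≠ V) ∧
       (∀ T₁ ∈ σ, ∀ T₂ ∈ σ, Disjoint T₁ T₂ ∨ T₁ ⊆ T₂ ∨ T₂ ⊆ T₁) ∧
       (∀ 𝒮 : Finset (Finset ℕ), 𝒮 ⊆ σ → 2 ≤ 𝒮.card →
          (↑𝒮 : Set (Finset ℕ)).Pairwise Disjoint → 𝒮.sup id ∉ B)}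

theorem pair_mem_nestedSetComplex_iff {V A₁ A₂ : Finset ℕ} {B : Set (Finset ℕ)}
    (hne : A₁ ≠ A₂) (hdisj : Disjoint A₁ A₂) :
    {A₁, A₂} ∈ nestedSetComplex V B ↔
      (A₁ ∈ B ∧ A₁ ≠ V) ∧ (A₂ ∈ B ∧ A₂ ≠ V) ∧ A₁ ∪ A₂ ∉ B := by
  have hcard : ({A₁, A₂} : Finset (Finset ℕ)).card = 2 := Finset.card_pair hne
  have hpw : (↑({A₁, A₂} : Finset (Finset ℕ)) : Set (Finset ℕ)).Pairwise Disjoint := by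
    rw [Finset.coe_pair]
    exact Set.pairwise_pair.2 fun _ => ⟨hdisj, hdisj.symm⟩
  have hsup : ({A₁, A₂} : Finset (Finset ℕ)).sup id = A₁ ∪ A₂ := by simp
  constructor
  · rintro ⟨hmem, -, hunion⟩
    refine ⟨hmem A₁ (by simp), hmem A₂ (by simp), ?_⟩
    simpa only [hsup] using hunion _ subset_rfl hcard.ge hpw
  · rintro ⟨h₁, h₂, hunion⟩
    refine ⟨by simp [h₁, h₂], ?_, fun 𝒮 hsub h𝒮 _ => ?_⟩
    · simp only [Finset.mem_insert, Finset.mem_singleton]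
      rintro _ (rfl | rfl) _ (rfl | rfl) <;> simp [hdisj, hdisj.symm]
    · rwa [Finset.eq_of_subset_of_card_le hsub (hcard ▸ h𝒮), hsup]

def contraction (V S : Finset ℕ) (B : Set (Finset ℕ)) : Set (Finset ℕ) :=
  {T | T.Nonempty ∧ T ⊆ V \ S ∧ (T ∈ B ∨ T ∪ S ∈ B)}

theorem singleton_mem_contraction {V S : Finset ℕ} {B : Set (Finset ℕ)} {i : ℕ}
    (hi : i ∈ V \ S) (hB : {i} ∈ B) : {i} ∈ contraction V S B :=
  ⟨Finset.singleton_nonempty i, Finset.singleton_subset_iff.mpr hi, Or.inl hB⟩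

theorem mem_contraction_of_union_mem {V S T : Finset ℕ} {B : Set (Finset ℕ)}
    (hT : T.Nonempty) (hsub : T ⊆ V \ S) (hB : T ∪ S ∈ B) : T ∈ contraction V S B :=
  ⟨hT, hsub, Or.inr hB⟩

namespace BP

theorem singleton_mem {n i : ℕ} (hi : i ∈ Finset.Icc 1 (n + 1)) : {i} ∈ BP n :=
  Or.inl (Or.inl (Or.inl ⟨i, hi, rfl⟩))

theorem one_two_union_mem {n : ℕ} {T : Finset ℕ} (hT : T ⊆ Finset.Icc 3 (n + 1)) :
    {1, 2} ∪ T ∈ BP n :=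
  Or.inl (Or.inl (Or.inr ⟨T, hT, rfl⟩))

theorem one_union_mem {n : ℕ} {T : Finset ℕ} (hT : T ⊆ Finset.Icc 3 n) (hne : T.Nonempty) :
    {1} ∪ T ∈ BP n :=
  Or.inl (Or.inr ⟨T, hT, hne, rfl⟩)

theorem eq_singleton_or_one_mem {n : ℕ} {T : Finset ℕ} (h : T ∈ BP n) :
    (∃ i, T = {i}) ∨ 1 ∈ T := by
  rcases h with ((⟨i, -, rfl⟩ | ⟨T, -, rfl⟩) | ⟨T, -, -, rfl⟩) | rfl
  · exact Or.inl ⟨i, rfl⟩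
  all_goals simp

theorem pair_not_mem {n i j : ℕ} (hij : i ≠ j) (hi : i ≠ 1) (hj : j ≠ 1) :
    {i, j} ∉ BP n := by
  intro h
  rcases eq_singleton_or_one_mem h with ⟨k, hk⟩ | h1
  · have hik : i ∈ ({k} : Finset ℕ) := hk ▸ Finset.mem_insert_self i {j}
    have hjk : j ∈ ({k} : Finset ℕ) := hk ▸ Finset.mem_insert_of_mem (Finset.mem_singleton_self j)
    rw [Finset.mem_singleton] at hik hjk
    exact hij (hik.trans hjk.symm)
  · simp only [Finset.mem_insert, Finset.mem_singleton] at h1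
    omega

theorem contraction_inter_subset {n : ℕ} {V S : Finset ℕ} (h1 : 1 ∈ S) :
    contraction V S (BP n) ∩ BP n ⊆ ↑((V \ S).image ({·} : ℕ → Finset ℕ)) := by
  rintro T ⟨⟨-, hsub, -⟩, hB⟩
  rcases eq_singleton_or_one_mem hB with ⟨i, rfl⟩ | hT1
  · exact Finset.mem_image_of_mem _ (Finset.singleton_subset_iff.mp hsub)
  · exact absurd h1 (Finset.mem_sdiff.mp (hsub hT1)).2

end BP

/-- The counterexample: for `B = B(P,4)` and `S = {1,3} ∈ B`, the elements
`S₁ = {2}`, `S₂ = {4}` of the contraction `B/S` satisfy `S₁ ⊔ S₂ ∈ B/S` but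
`S₁ ⊔ S₂ ∉ B`; consequently the nested set complex `N_{B/S}` is not isomorphic to the
full subcomplex of `N_B` on the vertex set `(B/S) ∩ B`. -/
theorem contraction_not_full_subcomplex :
    let V : Finset ℕ := Finset.Icc 1 5
    let B : Set (Finset ℕ) := BP 4
    let S : Finset ℕ := {1, 3}
    let C : Set (Finset ℕ) :=
      {T | T.Nonempty ∧ T ⊆ V \ S ∧ (T ∈ B ∨ T ∪ S ∈ B)}
    S ∈ B ∧ ({2} : Finset ℕ) ∈ C ∧ ({4} : Finset ℕ) ∈ C ∧
      Disjoint ({2} : Finset ℕ) ({4} : Finset ℕ) ∧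
      ({2} : Finset ℕ) ∪ {4} ∈ C ∧ ({2} : Finset ℕ) ∪ {4} ∉ B ∧
      ({{2}, {4}} : Finset (Finset ℕ)) ∈
        {σ ∈ nestedSetComplex V B | ∀ T ∈ σ, T ∈ C ∩ B} ∧
      ({{2}, {4}} : Finset (Finset ℕ)) ∉ nestedSetComplex (V \ S) C ∧
      ¬∃ f : Finset ℕ → Finset ℕ, Set.BijOn f (C ∩ B) (C \ {V \ S}) ∧
        ∀ σ : Finset (Finset ℕ), (∀ T ∈ σ, T ∈ C ∩ B) →
          (σ ∈ {σ' ∈ nestedSetComplex V B | ∀ T ∈ σ', T ∈ C ∩ B} ↔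
            σ.image f ∈ nestedSetComplex (V \ S) C) := by
  intro V B S C
  have hS : S ∈ B := BP.one_union_mem (T := {3}) (by decide) (Finset.singleton_nonempty 3)
  have h2B : {2} ∈ B := BP.singleton_mem (by decide)
  have h4B : {4} ∈ B := BP.singleton_mem (by decide)
  have h2 : {2} ∈ C := singleton_mem_contraction (by decide) h2B
  have h4 : {4} ∈ C := singleton_mem_contraction (by decide) h4B
  have h5 : {5} ∈ C := singleton_mem_contraction (by decide) (BP.singleton_mem (by decide))
  have h24S : {2, 4} ∪ S = {1, 2} ∪ {3, 4} := by decide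
  have h24 : {2, 4} ∈ C := mem_contraction_of_union_mem (Finset.insert_nonempty 2 {4}) (by decide)
    (h24S ▸ BP.one_two_union_mem (by decide))
  have h24B : {2, 4} ∉ B := BP.pair_not_mem (by decide) (by decide) (by decide)
  have hpair {W : Finset ℕ} {D : Set (Finset ℕ)} :=
    pair_mem_nestedSetComplex_iff (V := W) (B := D) (A₁ := {2}) (A₂ := {4}) (by decide) (by decide)
  refine ⟨hS, h2, h4, by decide, h24, h24B,
    ⟨hpair.2 ⟨⟨h2B, by decide⟩, ⟨h4B, by decide⟩, h24B⟩, ?_⟩, fun h => (hpair.1 h).2.2 h24, ?_⟩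
  · simp only [Finset.mem_insert, Finset.mem_singleton, forall_eq_or_imp, forall_eq]
    exact ⟨⟨h2, h2B⟩, ⟨h4, h4B⟩⟩
  rintro ⟨f, hbij, -⟩
  have hvertices : ↑({{2}, {4}, {5}, {2, 4}} : Finset (Finset ℕ)) ⊆ C \ {V \ S} := by
    simp only [Finset.coe_insert, Finset.coe_singleton, Set.insert_subset_iff,
      Set.singleton_subset_iff]
    exact ⟨⟨h2, by decide⟩, ⟨h4, by decide⟩, ⟨h5, by decide⟩, ⟨h24, by decide⟩⟩
  have hcard := Finset.card_le_card_of_surjOn f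
    (hbij.surjOn.mono (BP.contraction_inter_subset (V := V) (S := S) (by decide)) hvertices)
  exact absurd hcard (by decide)
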